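/- There exists a family of functions δ_{n;k} : J_n → J_{∑k}, indexed by n ≥ 1 and k : Fin n → ℕ with each k_i ≥ 1, such that: (a) for every generator s_{p,q} of J_n, δ_{n;k}(s_{p,q}) = s_{K_{p−1}+1, K_q} · ∏_{i=p}^{q} s_{K_{i−1}+1, K_i}, where K_i = k_1 + ⋯ + k_i and s_{a,a} denotes the identity element (the factors of the product pairwise commute); and (b) the twisted multiplicativity δ_{n;k}(g) · δ_{n;j}(h) = δ_{n;j}(g·h) holds for all g, h ∈ J_n whenever k_i = j_{π_n(h)⁻¹(i)} for all i (with δ_{n;k}(g) regarded in J_{∑j} via ∑k = ∑j). -/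

import Mathlib

/-- Generators `s_{p,q}`, `1 ≤ p < q ≤ n`, of the `n`-fruit cactus group. -/
def CactusGen (n : ℕ) : Type :=
  { pq : ℕ × ℕ // 1 ≤ pq.1 ∧ pq.1 < pq.2 ∧ pq.2 ≤ n }

/-- The defining relations of the `n`-fruit cactus group, as elements of the free group:
(i) `s_{p,q}² = e`; (ii) `s_{p,q}s_{k,l} = s_{k,l}s_{p,q}` for disjoint intervals;
(iii) `s_{p,q}s_{k,l} = s_{p+q-l,p+q-k}s_{p,q}` for `p ≤ k < l ≤ q`. -/
def cactusRels (n : ℕ) : Set (FreeGroup (CactusGen n)) :=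
  { x |
    (∃ (p q : ℕ) (h : 1 ≤ p ∧ p < q ∧ q ≤ n),
      x = FreeGroup.of (⟨(p, q), h⟩ : CactusGen n) * FreeGroup.of ⟨(p, q), h⟩) ∨
    (∃ (p q k l : ℕ) (h : 1 ≤ p ∧ p < q ∧ q ≤ n) (h' : 1 ≤ k ∧ k < l ∧ l ≤ n),
      (q < k ∨ l < p) ∧
      x = FreeGroup.of (⟨(p, q), h⟩ : CactusGen n) * FreeGroup.of ⟨(k, l), h'⟩ *
        (FreeGroup.of (⟨(k, l), h'⟩ : CactusGen n) * FreeGroup.of ⟨(p, q), h⟩)⁻¹) ∨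
    (∃ (p q k l : ℕ) (h : 1 ≤ p ∧ p < q ∧ q ≤ n) (h' : 1 ≤ k ∧ k < l ∧ l ≤ n)
        (h'' : 1 ≤ p + q - l ∧ p + q - l < p + q - k ∧ p + q - k ≤ n),
      (p ≤ k ∧ l ≤ q) ∧
      x = FreeGroup.of (⟨(p, q), h⟩ : CactusGen n) * FreeGroup.of ⟨(k, l), h'⟩ *
        (FreeGroup.of (⟨(p + q - l, p + q - k), h''⟩ : CactusGen n) *
          FreeGroup.of ⟨(p, q), h⟩)⁻¹) }

/-- The `n`-fruit cactus group `J_n`, as a presented group. -/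
def CactusGroup (n : ℕ) : Type :=
  PresentedGroup (cactusRels n)

instance (n : ℕ) : Group (CactusGroup n) :=
  inferInstanceAs (Group (PresentedGroup (cactusRels n)))

/-- The generator `s_{p,q}` of the cactus group `J_n`. -/
def s {n : ℕ} (p q : ℕ) (h : 1 ≤ p ∧ p < q ∧ q ≤ n) : CactusGroup n :=
  PresentedGroup.of ⟨(p, q), h⟩

/-- The generator `s_{p,q}` of `J_n` extended by the convention that `s_{p,p}` denotes the
identity element. -/
def sE {n : ℕ} (p q : ℕ) (h : 1 ≤ p ∧ p ≤ q ∧ q ≤ n) : CactusGroup n :=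
  if hlt : p < q then s p q ⟨h.1, hlt, h.2.2⟩ else 1

/-- Transport of cactus group elements along an equality. -/
def Jcast {a b : ℕ} (h : a = b) (x : CactusGroup a) : CactusGroup b := h ▸ x

/-- `partialSum k i = ∑_{j < i} k j`. -/
def partialSum {n : ℕ} (k : Fin n → ℕ) (i : Fin n) : ℕ :=
  ∑ j ∈ Finset.Iio i, k j

theorem partialSum_add_le {n : ℕ} (k : Fin n → ℕ) (i : Fin n) :
    partialSum k i + k i ≤ ∑ j, k j := by
  have h1 : partialSum k i + k i = ∑ j ∈ Finset.Iic i, k j := by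
    rw [partialSum, add_comm, ← Finset.sum_insert (by simp), Finset.Iio_insert]
  rw [h1]
  exact Finset.sum_le_sum_of_subset (Finset.subset_univ _)

/-- The interval reversal `ŝ_{p,q} ∈ Σ_n` (1-indexed letters): it fixes `i` for `i < p` or
`i > q` and sends `i` to `p + q - i` for `p ≤ i ≤ q`.  Here `Fin n` is regarded as the set
of letters `{1, …, n}` via `i ↦ i + 1`. -/
def sHat (n p q : ℕ) : Equiv.Perm (Fin n) :=
  Function.Involutive.toPerm
    (fun i => if h : 1 ≤ p ∧ p ≤ i.1 + 1 ∧ i.1 + 1 ≤ q ∧ q ≤ n then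
        ⟨p + q - (i.1 + 1) - 1, by omega⟩ else i)
    (by
      intro i
      dsimp only
      by_cases h : 1 ≤ p ∧ p ≤ i.1 + 1 ∧ i.1 + 1 ≤ q ∧ q ≤ n
      · rw [dif_pos h, dif_pos (by dsimp only; omega)]
        exact Fin.ext (by dsimp only; omega)
      · rw [dif_neg h, dif_neg h])

/-- `Kfun k t = k 1 + ⋯ + k t` (`K_0 = 0`), for `k : Fin n → ℕ` and `t ≤ n`. -/
def Kfun {n : ℕ} (k : Fin n → ℕ) (t : ℕ) : ℕ :=
  ∑ j ∈ Finset.univ.filter (fun j : Fin n => (j : ℕ) < t), k j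

theorem Kfun_le_sum {n : ℕ} (k : Fin n → ℕ) (t : ℕ) : Kfun k t ≤ ∑ j, k j :=
  Finset.sum_le_sum_of_subset (Finset.filter_subset _ _)

theorem Kfun_succ {n : ℕ} (k : Fin n → ℕ) (i : ℕ) (hi : i < n) :
    Kfun k (i + 1) = Kfun k i + k ⟨i, hi⟩ := by
  unfold Kfun
  rw [show (Finset.univ.filter fun j : Fin n => (j : ℕ) < i + 1) =
      insert ⟨i, hi⟩ (Finset.univ.filter fun j : Fin n => (j : ℕ) < i) from ?_]
  · rw [Finset.sum_insert (by simp)]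
    ring
  · ext j
    simp [Fin.ext_iff]
    omega

theorem Kfun_mono {n : ℕ} (k : Fin n → ℕ) {a b : ℕ} (hab : a ≤ b) :
    Kfun k a ≤ Kfun k b :=
  Finset.sum_le_sum_of_subset (fun x hx => by
    simp only [Finset.mem_filter] at hx ⊢
    exact ⟨hx.1, by omega⟩)

theorem Kfun_lt {n : ℕ} (k : Fin n → ℕ) (hk : ∀ i, 1 ≤ k i) {a b : ℕ}
    (hab : a < b) (hb : b ≤ n) : Kfun k a + 1 ≤ Kfun k b := by
  have h1 : Kfun k (a + 1) = Kfun k a + k ⟨a, by omega⟩ := Kfun_succ k a (by omega)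
  have h2 : Kfun k (a + 1) ≤ Kfun k b := Kfun_mono k (by omega)
  have := hk (⟨a, by omega⟩ : Fin n)
  omega

/-!
For a fixed total weight `N`, the maps `δ_{n;k}` for all weight vectors `k` of total `N` are the
first component of a single homomorphism from `J_n` into the semidirect product
`(weights → J_N) ⋊ Σ_n`, in which `Σ_n` acts by precomposing with `k ↦ k ∘ σ`; twisted
multiplicativity is multiplicativity of this homomorphism. It exists because the images of the
generators satisfy the cactus relations. With `K` the partial sums of the weights, conjugation
by the reversal `s_{K_a+1, K_b}` of a run of blocks sends the reversal of a sub-run of blocks to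
the reversal of the mirrored sub-run for the reversed weights, and single-block reversals are
commuting involutions; the three relations follow from these facts by direct computation.
-/

open Equiv

section Relations

variable {n : ℕ}

theorem s_mul_self (p q : ℕ) (h : 1 ≤ p ∧ p < q ∧ q ≤ n) : s p q h * s p q h = 1 :=
  PresentedGroup.one_of_mem (Or.inl ⟨p, q, h, rfl⟩)

theorem s_commute (p q k l : ℕ) (h : 1 ≤ p ∧ p < q ∧ q ≤ n) (h' : 1 ≤ k ∧ k < l ∧ l ≤ n)
    (hd : q < k ∨ l < p) : Commute (s p q h) (s k l h') :=
  mul_inv_eq_one.1 (PresentedGroup.one_of_mem (Or.inr (Or.inl ⟨p, q, k, l, h, h', hd, rfl⟩)))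

theorem s_mul_s_of_le (p q k l : ℕ) (h : 1 ≤ p ∧ p < q ∧ q ≤ n) (h' : 1 ≤ k ∧ k < l ∧ l ≤ n)
    (h'' : 1 ≤ p + q - l ∧ p + q - l < p + q - k ∧ p + q - k ≤ n) (hd : p ≤ k ∧ l ≤ q) :
    s p q h * s k l h' = s (p + q - l) (p + q - k) h'' * s p q h :=
  mul_inv_eq_one.1 (PresentedGroup.one_of_mem (Or.inr (Or.inr ⟨p, q, k, l, h, h', h'', hd, rfl⟩)))

/-- Unlike `sE`, this takes no bound proofs, so block sums can be substituted for `a` and `b`. -/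
def sTotal (a b : ℕ) : CactusGroup n :=
  if h : 1 ≤ a ∧ a < b ∧ b ≤ n then s a b h else 1

theorem sE_eq_sTotal (p q : ℕ) (h : 1 ≤ p ∧ p ≤ q ∧ q ≤ n) : sE p q h = sTotal p q := by
  unfold sE sTotal
  by_cases hpq : p < q
  · rw [dif_pos hpq, dif_pos ⟨h.1, hpq, h.2.2⟩]
  · rw [dif_neg hpq, dif_neg (by omega)]

theorem sTotal_mul_self (a b : ℕ) : (sTotal a b : CactusGroup n) * sTotal a b = 1 := by
  unfold sTotal
  split_ifs with h
  · exact s_mul_self a b h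
  · exact mul_one 1

theorem sTotal_commute {a b c d : ℕ} (hd : b < c ∨ d < a) :
    Commute (sTotal a b : CactusGroup n) (sTotal c d) := by
  unfold sTotal
  split_ifs with h h'
  · exact s_commute a b c d h h' hd
  all_goals simp

theorem sTotal_mul_sTotal_of_le {a b c d : ℕ} (ha : 1 ≤ a) (hac : a ≤ c) (hdb : d ≤ b)
    (hb : b ≤ n) :
    (sTotal a b : CactusGroup n) * sTotal c d = sTotal (a + b - d) (a + b - c) * sTotal a b := by
  by_cases hcd : c < d
  · unfold sTotal
    rw [dif_pos ⟨ha, by omega, hb⟩, dif_pos ⟨by omega, hcd, by omega⟩,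
      dif_pos ⟨by omega, by omega, by omega⟩]
    exact s_mul_s_of_le a b c d _ _ _ ⟨hac, hdb⟩
  · have h₁ : (sTotal c d : CactusGroup n) = 1 := dif_neg (by omega)
    have h₂ : (sTotal (a + b - d) (a + b - c) : CactusGroup n) = 1 := dif_neg (by omega)
    rw [h₁, h₂, mul_one, one_mul]

end Relations

section Reversal

variable {n : ℕ}

theorem sHat_apply_val (p q : ℕ) (i : Fin n) :
    (sHat n p q i : ℕ) =
      if 1 ≤ p ∧ p ≤ i.1 + 1 ∧ i.1 + 1 ≤ q ∧ q ≤ n then p + q - (i.1 + 1) - 1 else i.1 := by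
  change Fin.val (dite _ _ _) = _
  split_ifs <;> rfl

theorem sHat_mul_self (p q : ℕ) : sHat n p q * sHat n p q = 1 := by
  ext i
  simp only [Perm.mul_apply, Perm.one_apply, sHat_apply_val]
  split_ifs <;> omega

theorem sHat_commute {p q k l : ℕ} (hd : q < k ∨ l < p) :
    Commute (sHat n p q) (sHat n k l) := by
  ext i
  simp only [Perm.mul_apply, sHat_apply_val]
  split_ifs <;> omega

theorem sHat_mul_sHat_of_le {p q k l : ℕ} (hp : 1 ≤ p) (hq : q ≤ n) (hpk : p ≤ k) (hlq : l ≤ q) :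
    sHat n p q * sHat n k l = sHat n (p + q - l) (p + q - k) * sHat n p q := by
  ext i
  simp only [Perm.mul_apply, sHat_apply_val]
  split_ifs <;> omega

theorem comp_sHat_comp_sHat (w : Fin n → ℕ) (p q : ℕ) : (w ∘ sHat n p q) ∘ sHat n p q = w := by
  rw [Function.comp_assoc, ← Perm.coe_mul, sHat_mul_self, Perm.coe_one, Function.comp_id]

theorem Kfun_eq_sum_ite (w : Fin n → ℕ) (t : ℕ) :
    Kfun w t = ∑ i : Fin n, if (i : ℕ) < t then w i else 0 :=
  Finset.sum_filter _ _

theorem Kfun_comp_sHat (w : Fin n → ℕ) (p q t : ℕ) :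
    Kfun (w ∘ sHat n p q) t = ∑ i, if (sHat n p q i : ℕ) < t then w i else 0 := by
  rw [Kfun_eq_sum_ite, ← Equiv.sum_comp (sHat n p q)]
  simp only [Function.comp_apply, ← Perm.mul_apply, sHat_mul_self, Perm.one_apply]

/-- On `[a, b)` the reversed weights are the original ones read backwards. -/
theorem Kfun_comp_sHat_add {a b t : ℕ} (w : Fin n → ℕ) (hat : a ≤ t) (htb : t ≤ b)
    (hb : b ≤ n) :
    Kfun (w ∘ sHat n (a + 1) b) t + Kfun w (a + b - t) = Kfun w a + Kfun w b := by
  rw [Kfun_comp_sHat]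
  simp only [Kfun_eq_sum_ite, ← Finset.sum_add_distrib]
  refine Finset.sum_congr rfl fun i _ => ?_
  rw [sHat_apply_val]
  split_ifs <;> omega

theorem Kfun_comp_sHat_of_le_or_le {a b t : ℕ} (w : Fin n → ℕ) (ht : t ≤ a ∨ b ≤ t) :
    Kfun (w ∘ sHat n (a + 1) b) t = Kfun w t := by
  rw [Kfun_comp_sHat, Kfun_eq_sum_ite]
  refine Finset.sum_congr rfl fun i _ => ?_
  rw [sHat_apply_val]
  split_ifs <;> omega

end Reversal

section Blocks

variable {n N : ℕ} (w : Fin n → ℕ)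

/- Blocks are numbered from `0`: block `m` is the run of letters `K_m + 1, …, K_{m+1}` of `J_N`,
where `K = Kfun w`. Thus `blockRev w a b = s_{K_a+1, K_b}` reverses blocks `a, …, b - 1` as a
whole, `blockRevs w a b` reverses each of them separately, and `cable w (p - 1) q` is the image
`δ_{n;w}(s_{p,q})`. -/
def blockRev (a b : ℕ) : CactusGroup N :=
  sTotal (Kfun w a + 1) (Kfun w b)

def blockRevs (a b : ℕ) : CactusGroup N :=
  ((List.range' a (b - a)).map fun m => blockRev w m (m + 1)).prod

def cable (a b : ℕ) : CactusGroup N :=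
  blockRev w a b * blockRevs w a b

theorem blockRev_mul_self (a b : ℕ) : (blockRev w a b : CactusGroup N) * blockRev w a b = 1 :=
  sTotal_mul_self _ _

theorem blockRev_commute {a b c d : ℕ} (h : b ≤ c ∨ d ≤ a) :
    Commute (blockRev w a b : CactusGroup N) (blockRev w c d) := by
  refine sTotal_commute ?_
  rcases h with h | h
  · exact Or.inl (Nat.lt_succ_of_le (Kfun_mono w h))
  · exact Or.inr (Nat.lt_succ_of_le (Kfun_mono w h))

theorem blockRev_comp_sHat {a b c d : ℕ} (hc : c ≤ a ∨ b ≤ c) (hd : d ≤ a ∨ b ≤ d) :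
    (blockRev (w ∘ sHat n (a + 1) b) c d : CactusGroup N) = blockRev w c d := by
  rw [blockRev, blockRev, Kfun_comp_sHat_of_le_or_le w hc, Kfun_comp_sHat_of_le_or_le w hd]

theorem blockRev_mul_blockRev {a b c d : ℕ} (hac : a ≤ c) (hcd : c ≤ d) (hdb : d ≤ b)
    (hb : b ≤ n) (hN : ∑ i, w i ≤ N) :
    (blockRev w a b : CactusGroup N) * blockRev w c d =
      blockRev (w ∘ sHat n (a + 1) b) (a + b - d) (a + b - c) * blockRev w a b := by
  have hKac := Kfun_mono w hac
  have hKcd := Kfun_mono w hcd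
  have hKdb := Kfun_mono w hdb
  have hKb := (Kfun_le_sum w b).trans hN
  have hd := Kfun_comp_sHat_add w (a := a) (t := a + b - d) (by omega) (by omega) hb
  have hc := Kfun_comp_sHat_add w (a := a) (t := a + b - c) (by omega) (by omega) hb
  rw [show a + b - (a + b - d) = d by omega] at hd
  rw [show a + b - (a + b - c) = c by omega] at hc
  rw [blockRev, blockRev, sTotal_mul_sTotal_of_le (by omega) (by omega) hKdb hKb, blockRev]
  congr 2 <;> omega

theorem blockRevs_of_le {a b : ℕ} (h : b ≤ a) : (blockRevs w a b : CactusGroup N) = 1 := by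
  rw [blockRevs, Nat.sub_eq_zero_of_le h, List.range'_zero, List.map_nil, List.prod_nil]

theorem blockRevs_succ (a : ℕ) :
    (blockRevs w a (a + 1) : CactusGroup N) = blockRev w a (a + 1) := by
  simp [blockRevs]

theorem blockRevs_mul_blockRevs {a b c : ℕ} (hac : a ≤ c) (hcb : c ≤ b) :
    (blockRevs w a c : CactusGroup N) * blockRevs w c b = blockRevs w a b := by
  obtain ⟨k, rfl⟩ := Nat.exists_eq_add_of_le hac
  rw [blockRevs, blockRevs, blockRevs, ← List.prod_append, ← List.map_append,
    Nat.add_sub_cancel_left, List.range'_append_1, show k + (b - (a + k)) = b - a by omega]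

theorem blockRev_commute_blockRevs {a b c d : ℕ} (h : b ≤ c ∨ d ≤ a) :
    Commute (blockRev w a b : CactusGroup N) (blockRevs w c d) := by
  refine Commute.list_prod_right _ _ fun x hx => ?_
  obtain ⟨m, hm, rfl⟩ := List.mem_map.1 hx
  rw [List.mem_range'_1] at hm
  exact blockRev_commute w (by omega)

theorem blockRevs_commute {a b c d : ℕ} (h : b ≤ c ∨ d ≤ a) :
    Commute (blockRevs w a b : CactusGroup N) (blockRevs w c d) := by
  refine Commute.list_prod_left _ _ fun x hx => ?_
  obtain ⟨m, hm, rfl⟩ := List.mem_map.1 hx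
  rw [List.mem_range'_1] at hm
  exact blockRev_commute_blockRevs w (by omega)

theorem blockRevs_mul_self (a b : ℕ) : (blockRevs w a b : CactusGroup N) * blockRevs w a b = 1 := by
  rcases le_total b a with hba | hab
  · rw [blockRevs_of_le w hba, one_mul]
  induction b, hab using Nat.le_induction with
  | base => rw [blockRevs_of_le w le_rfl, one_mul]
  | succ b hab ih =>
    rw [← blockRevs_mul_blockRevs w hab b.le_succ, blockRevs_succ,
      (blockRev_commute_blockRevs w (a := b) (b := b + 1) (c := a) (d := b)
        (Or.inr le_rfl)).mul_mul_mul_comm, ih, blockRev_mul_self, one_mul]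

theorem blockRevs_comp_sHat {a b c d : ℕ} (h : d ≤ a ∨ b ≤ c) :
    (blockRevs (w ∘ sHat n (a + 1) b) c d : CactusGroup N) = blockRevs w c d := by
  refine congrArg List.prod (List.map_congr_left fun m hm => ?_)
  rw [List.mem_range'_1] at hm
  exact blockRev_comp_sHat w (by omega) (by omega)

theorem blockRev_mul_blockRevs {a b c d : ℕ} (hac : a ≤ c) (hcd : c ≤ d) (hdb : d ≤ b)
    (hb : b ≤ n) (hN : ∑ i, w i ≤ N) :
    (blockRev w a b : CactusGroup N) * blockRevs w c d =
      blockRevs (w ∘ sHat n (a + 1) b) (a + b - d) (a + b - c) * blockRev w a b := by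
  induction d, hcd using Nat.le_induction with
  | base => rw [blockRevs_of_le w le_rfl, blockRevs_of_le _ le_rfl, mul_one, one_mul]
  | succ d hcd ih =>
    set w' := w ∘ sHat n (a + 1) b
    obtain ⟨e, he, he'⟩ : ∃ e, a + b - (d + 1) = e ∧ a + b - d = e + 1 :=
      ⟨a + b - (d + 1), rfl, by omega⟩
    calc (blockRev w a b : CactusGroup N) * blockRevs w c (d + 1)
        = blockRev w a b * blockRevs w c d * blockRev w d (d + 1) := by
          rw [← blockRevs_mul_blockRevs w hcd d.le_succ, blockRevs_succ, mul_assoc]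
      _ = blockRevs w' (e + 1) (a + b - c) * (blockRev w a b * blockRev w d (d + 1)) := by
          rw [ih (by omega), he', mul_assoc]
      _ = blockRevs w' (e + 1) (a + b - c) * blockRev w' e (e + 1) * blockRev w a b := by
          rw [blockRev_mul_blockRev w (by omega) d.le_succ hdb hb hN, he, he', mul_assoc]
      _ = blockRevs w' (a + b - (d + 1)) (a + b - c) * blockRev w a b := by
          rw [he, ← (blockRev_commute_blockRevs w' (Or.inl le_rfl)).eq, ← blockRevs_succ,
            blockRevs_mul_blockRevs w' e.le_succ (by omega)]

end Blocks

section Cable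

variable {n N : ℕ} (w : Fin n → ℕ)

theorem cable_comp_sHat {a b c d : ℕ} (hcd : c ≤ d) (h : d ≤ a ∨ b ≤ c) :
    (cable (w ∘ sHat n (a + 1) b) c d : CactusGroup N) = cable w c d := by
  rw [cable, cable, blockRev_comp_sHat w (by omega) (by omega), blockRevs_comp_sHat w h]

theorem cable_commute {a b c d : ℕ} (h : b ≤ c ∨ d ≤ a) :
    Commute (cable w a b : CactusGroup N) (cable w c d) :=
  ((blockRev_commute w h).mul_right (blockRev_commute_blockRevs w h)).mul_left
    (((blockRev_commute_blockRevs w h.symm).symm).mul_right (blockRevs_commute w h))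

theorem cable_mul_cable_comp_sHat {a b : ℕ} (hab : a ≤ b) (hb : b ≤ n) (hN : ∑ i, w i ≤ N) :
    (cable w a b : CactusGroup N) * cable (w ∘ sHat n (a + 1) b) a b = 1 := by
  have hT : (blockRev (w ∘ sHat n (a + 1) b) a b : CactusGroup N) = blockRev w a b :=
    blockRev_comp_sHat w (Or.inl le_rfl) (Or.inr le_rfl)
  have hTS := blockRev_mul_blockRevs (N := N) w le_rfl hab le_rfl hb hN
  rw [Nat.add_sub_cancel, Nat.add_sub_cancel_left] at hTS
  rw [cable, cable, hT, ← mul_assoc, hTS, mul_assoc (blockRevs _ a b), blockRev_mul_self,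
    mul_one, blockRevs_mul_self]

theorem cable_eq_of_le {a b c d : ℕ} (hac : a ≤ c) (hcd : c ≤ d) (hdb : d ≤ b) :
    (cable w a b : CactusGroup N) =
      blockRev w a b * (blockRevs w a c * blockRevs w c d * blockRevs w d b) := by
  rw [cable, ← blockRevs_mul_blockRevs w hac (hcd.trans hdb), ← blockRevs_mul_blockRevs w hcd hdb,
    mul_assoc]

theorem cable_comp_sHat_mul_cable {a b c d : ℕ} (hac : a ≤ c) (hcd : c ≤ d) (hdb : d ≤ b)
    (hb : b ≤ n) (hN : ∑ i, w i ≤ N) :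
    (cable (w ∘ sHat n (c + 1) d) a b : CactusGroup N) * cable w c d =
      blockRev w a b * blockRevs w a c * blockRev w c d * blockRevs w d b := by
  have hUV := blockRev_mul_blockRevs (N := N) w le_rfl hcd le_rfl (hdb.trans hb) hN
  rw [Nat.add_sub_cancel, Nat.add_sub_cancel_left] at hUV
  rw [cable_eq_of_le _ hac hcd hdb, blockRev_comp_sHat w (Or.inl hac) (Or.inr hdb),
    blockRevs_comp_sHat w (Or.inl le_rfl), blockRevs_comp_sHat w (Or.inr le_rfl), cable]
  set U : CactusGroup N := blockRev w c d
  set V : CactusGroup N := blockRevs w c d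
  set B : CactusGroup N := blockRevs w d b
  set V' : CactusGroup N := blockRevs (w ∘ sHat n (c + 1) d) c d
  have hUVB : Commute (U * V) B :=
    (blockRev_commute_blockRevs w (Or.inl le_rfl)).mul_left (blockRevs_commute w (Or.inl le_rfl))
  have hV'V' : V' * V' = 1 := blockRevs_mul_self _ c d
  calc blockRev w a b * (blockRevs w a c * V' * B) * (U * V)
      = blockRev w a b * blockRevs w a c * V' * (U * V * B) := by
        rw [hUVB.eq]; simp only [mul_assoc]
    _ = blockRev w a b * blockRevs w a c * (V' * V') * U * B := by
        rw [hUV]; simp only [mul_assoc]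
    _ = blockRev w a b * blockRevs w a c * U * B := by rw [hV'V', mul_one]

theorem mirror_cable_mul_cable {a b c d : ℕ} (hac : a ≤ c) (hcd : c ≤ d) (hdb : d ≤ b)
    (hb : b ≤ n) (hN : ∑ i, w i ≤ N) :
    (cable (w ∘ sHat n (a + 1) b) (a + b - d) (a + b - c) : CactusGroup N) * cable w a b =
      blockRev w a b * blockRevs w a c * blockRev w c d * blockRevs w d b := by
  have hTU := blockRev_mul_blockRev (N := N) w hac hcd hdb hb hN
  have hTV := blockRev_mul_blockRevs (N := N) w hac hcd hdb hb hN
  rw [cable, cable_eq_of_le w hac hcd hdb]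
  set T : CactusGroup N := blockRev w a b
  set U : CactusGroup N := blockRev w c d
  set V : CactusGroup N := blockRevs w c d
  set A : CactusGroup N := blockRevs w a c
  set B : CactusGroup N := blockRevs w d b
  set R : CactusGroup N := blockRev (w ∘ sHat n (a + 1) b) (a + b - d) (a + b - c)
  set S : CactusGroup N := blockRevs (w ∘ sHat n (a + 1) b) (a + b - d) (a + b - c)
  have hUA : Commute U A := blockRev_commute_blockRevs w (Or.inr le_rfl)
  have hAV : Commute A V := blockRevs_commute w (Or.inl le_rfl)
  have hVV : V * V = 1 := blockRevs_mul_self w c d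
  calc R * S * (T * (A * V * B))
      = R * (S * T) * (A * V * B) := by simp only [mul_assoc]
    _ = R * T * V * (A * V * B) := by rw [← hTV]; simp only [mul_assoc]
    _ = T * U * (V * A) * V * B := by rw [← hTU]; simp only [mul_assoc]
    _ = T * (U * A) * (V * V) * B := by rw [← hAV.eq]; simp only [mul_assoc]
    _ = T * A * U * B := by rw [hUA.eq, hVV, mul_one]; simp only [mul_assoc]

theorem cable_nested {a b c d : ℕ} (hac : a ≤ c) (hcd : c ≤ d) (hdb : d ≤ b) (hb : b ≤ n)
    (hN : ∑ i, w i ≤ N) :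
    (cable (w ∘ sHat n (c + 1) d) a b : CactusGroup N) * cable w c d =
      cable (w ∘ sHat n (a + 1) b) (a + b - d) (a + b - c) * cable w a b :=
  (cable_comp_sHat_mul_cable w hac hcd hdb hb hN).trans
    (mirror_cable_mul_cable w hac hcd hdb hb hN).symm

end Cable

section Cabling

variable {n N : ℕ}

abbrev Weights (n N : ℕ) : Type :=
  {w : Fin n → ℕ // ∑ i, w i = N}

def Weights.comp (w : Weights n N) (σ : Perm (Fin n)) : Weights n N :=
  ⟨w.1 ∘ σ, (Equiv.sum_comp σ w.1).trans w.2⟩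

theorem Weights.comp_comp_inv (w : Weights n N) (σ : Perm (Fin n)) :
    (w.comp σ).comp σ⁻¹ = w :=
  Subtype.ext (funext fun _ => by simp [Weights.comp])

theorem Weights.comp_inv_comp (w : Weights n N) (σ : Perm (Fin n)) :
    (w.comp σ⁻¹).comp σ = w :=
  Subtype.ext (funext fun _ => by simp [Weights.comp])

def precompAut : Perm (Fin n) →* MulAut (Weights n N → CactusGroup N) where
  toFun σ :=
    { toFun := fun f w => f (w.comp σ)
      invFun := fun f w => f (w.comp σ⁻¹)
      left_inv := fun f => funext fun w => congrArg f (w.comp_inv_comp σ)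
      right_inv := fun f => funext fun w => congrArg f (w.comp_comp_inv σ)
      map_mul' := fun _ _ => rfl }
  map_one' := rfl
  map_mul' := fun _ _ => rfl

abbrev CablingGroup (n N : ℕ) : Type :=
  (Weights n N → CactusGroup N) ⋊[precompAut] Perm (Fin n)

def cableGen (x : CactusGen n) : CablingGroup n N :=
  ⟨fun w => cable (w.1 ∘ sHat n x.1.1 x.1.2) (x.1.1 - 1) x.1.2, sHat n x.1.1 x.1.2⟩

theorem cableGen_mul_self (p q : ℕ) (h : 1 ≤ p ∧ p < q ∧ q ≤ n) :
    (cableGen ⟨(p, q), h⟩ : CablingGroup n N) * cableGen ⟨(p, q), h⟩ = 1 := by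
  obtain ⟨a, rfl⟩ : ∃ a, p = a + 1 := ⟨p - 1, by omega⟩
  refine SemidirectProduct.ext (funext fun w => ?_) (sHat_mul_self _ _)
  exact cable_mul_cable_comp_sHat (a := a) (b := q) _ (by omega) h.2.2 (w.comp _).2.le

theorem cableGen_commute (p q k l : ℕ) (h : 1 ≤ p ∧ p < q ∧ q ≤ n)
    (h' : 1 ≤ k ∧ k < l ∧ l ≤ n) (hd : q < k ∨ l < p) :
    (cableGen ⟨(p, q), h⟩ : CablingGroup n N) *
      cableGen ⟨(k, l), h'⟩ = cableGen ⟨(k, l), h'⟩ * cableGen ⟨(p, q), h⟩ := by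
  obtain ⟨a, rfl⟩ : ∃ a, p = a + 1 := ⟨p - 1, by omega⟩
  obtain ⟨c, rfl⟩ : ∃ c, k = c + 1 := ⟨k - 1, by omega⟩
  refine SemidirectProduct.ext (funext fun w => ?_) (sHat_commute hd).eq
  set u := (w.1 ∘ sHat n (a + 1) q) ∘ sHat n (c + 1) l
  have hu : (w.1 ∘ sHat n (c + 1) l) ∘ sHat n (a + 1) q = u := by
    rw [Function.comp_assoc, ← Perm.coe_mul, ← (sHat_commute hd).eq, Perm.coe_mul,
      ← Function.comp_assoc]
  have hpq : (cable (w.1 ∘ sHat n (a + 1) q) a q : CactusGroup N) = cable u a q :=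
    (cable_comp_sHat _ (by omega) (by omega)).symm
  have hkl : (cable (w.1 ∘ sHat n (c + 1) l) c l : CactusGroup N) = cable u c l := by
    rw [← hu]
    exact (cable_comp_sHat _ (by omega) (by omega)).symm
  change cable (w.1 ∘ sHat n (a + 1) q) a q * cable u c l =
    cable (w.1 ∘ sHat n (c + 1) l) c l * cable ((w.1 ∘ sHat n (c + 1) l) ∘ sHat n (a + 1) q) a q
  rw [hpq, hkl, hu]
  exact cable_commute u (by omega)

theorem cableGen_mul_cableGen_of_le (p q k l : ℕ) (h : 1 ≤ p ∧ p < q ∧ q ≤ n)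
    (h' : 1 ≤ k ∧ k < l ∧ l ≤ n) (h'' : 1 ≤ p + q - l ∧ p + q - l < p + q - k ∧ p + q - k ≤ n)
    (hd : p ≤ k ∧ l ≤ q) :
    (cableGen ⟨(p, q), h⟩ : CablingGroup n N) *
      cableGen ⟨(k, l), h'⟩ = cableGen ⟨(p + q - l, p + q - k), h''⟩ * cableGen ⟨(p, q), h⟩ := by
  have hσ := sHat_mul_sHat_of_le (n := n) h.1 h.2.2 hd.1 hd.2
  obtain ⟨a, rfl⟩ : ∃ a, p = a + 1 := ⟨p - 1, by omega⟩
  obtain ⟨c, rfl⟩ : ∃ c, k = c + 1 := ⟨k - 1, by omega⟩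
  refine SemidirectProduct.ext (funext fun w => ?_) hσ
  change cable (w.1 ∘ sHat n (a + 1) q) a q *
      cable ((w.1 ∘ sHat n (a + 1) q) ∘ sHat n (c + 1) l) c l =
    cable (w.1 ∘ sHat n (a + 1 + q - l) (a + 1 + q - (c + 1))) (a + 1 + q - l - 1)
        (a + 1 + q - (c + 1)) *
      cable ((w.1 ∘ sHat n (a + 1 + q - l) (a + 1 + q - (c + 1))) ∘ sHat n (a + 1) q) a q
  obtain ⟨u, hu⟩ : ∃ u, w.1 ∘ sHat n (a + 1) q = u ∘ sHat n (c + 1) l :=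
    ⟨_, (comp_sHat_comp_sHat _ _ _).symm⟩
  have hu' : u = (w.1 ∘ sHat n (a + 1 + q - l) (a + 1 + q - (c + 1))) ∘ sHat n (a + 1) q := by
    rw [← comp_sHat_comp_sHat u (c + 1) l, ← hu, Function.comp_assoc, Function.comp_assoc,
      ← Perm.coe_mul, ← Perm.coe_mul, hσ]
  rw [hu, comp_sHat_comp_sHat, ← hu', ← comp_sHat_comp_sHat (w.1 ∘ _) (a + 1) q, ← hu',
    show a + 1 + q - l - 1 = a + q - l by omega, show a + 1 + q - (c + 1) = a + q - c by omega]
  exact cable_nested u (by omega) (by omega) hd.2 h.2.2 (hu' ▸ ((w.comp _).comp _).2.le)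

theorem cableGen_rels :
    ∀ r ∈ cactusRels n, FreeGroup.lift (cableGen (N := N)) r = 1 := by
  have lift_sq (x : CactusGen n) :
      FreeGroup.lift (cableGen (N := N)) (FreeGroup.of x * FreeGroup.of x) =
        cableGen x * cableGen x := by
    simp only [map_mul, FreeGroup.lift_apply_of]
  have lift_rel (x y z t : CactusGen n) :
      FreeGroup.lift (cableGen (N := N))
          (FreeGroup.of x * FreeGroup.of y * (FreeGroup.of z * FreeGroup.of t)⁻¹) =
        cableGen x * cableGen y * (cableGen z * cableGen t)⁻¹ := by
    simp only [map_mul, map_inv, FreeGroup.lift_apply_of]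
  rintro r (⟨p, q, h, rfl⟩ | ⟨p, q, k, l, h, h', hd, rfl⟩ | ⟨p, q, k, l, h, h', h'', hd, rfl⟩)
  · exact (lift_sq _).trans (cableGen_mul_self p q h)
  · exact (lift_rel _ _ _ _).trans (mul_inv_eq_one.2 (cableGen_commute p q k l h h' hd))
  · exact (lift_rel _ _ _ _).trans
      (mul_inv_eq_one.2 (cableGen_mul_cableGen_of_le p q k l h h' h'' hd))

def cableHom (n N : ℕ) : CactusGroup n →* CablingGroup n N :=
  PresentedGroup.toGroup cableGen_rels

theorem cableHom_s (p q : ℕ) (h : 1 ≤ p ∧ p < q ∧ q ≤ n) :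
    cableHom n N (s p q h) = cableGen ⟨(p, q), h⟩ :=
  PresentedGroup.toGroup.of cableGen_rels

theorem cableHom_right (π : CactusGroup n →* Perm (Fin n))
    (hπ : ∀ p q (h : 1 ≤ p ∧ p < q ∧ q ≤ n), π (s p q h) = sHat n p q) (g : CactusGroup n) :
    (cableHom n N g).right = π g := by
  have : SemidirectProduct.rightHom.comp (cableHom n N) = π :=
    PresentedGroup.ext fun x => (congrArg SemidirectProduct.right (cableHom_s _ _ x.2)).trans
      (hπ _ _ x.2).symm
  exact DFunLike.congr_fun this g

theorem Jcast_cableHom_left {M N : ℕ} (e : M = N) (g : CactusGroup n) (x : Fin n → ℕ)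
    (hx : ∑ i, x i = M) :
    Jcast e ((cableHom n M g).left ⟨x, hx⟩) = (cableHom n N g).left ⟨x, hx.trans e⟩ := by
  subst e
  rfl

/-- `cableHom` records the image of `g` at the weights as permuted by `g`, so `δ_{n;k}(g)` is read
off at `k ∘ σ⁻¹`, where `σ` is the permutation of `g`. -/
def cabling (k : Fin n → ℕ) (g : CactusGroup n) : CactusGroup (∑ i, k i) :=
  (cableHom n (∑ i, k i) g).left (Weights.comp ⟨k, rfl⟩ (cableHom n (∑ i, k i) g).right⁻¹)

theorem cabling_s (k : Fin n → ℕ) (p q : ℕ) (h : 1 ≤ p ∧ p < q ∧ q ≤ n) :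
    cabling k (s p q h) = cable k (p - 1) q := by
  rw [cabling, cableHom_s]
  change cable ((k ∘ ⇑(sHat n p q)⁻¹) ∘ sHat n p q) (p - 1) q = _
  rw [Function.comp_assoc, ← Perm.coe_mul, inv_mul_cancel, Perm.coe_one, Function.comp_id]

theorem cabling_mul (π : CactusGroup n →* Perm (Fin n))
    (hπ : ∀ p q (h : 1 ≤ p ∧ p < q ∧ q ≤ n), π (s p q h) = sHat n p q) (j : Fin n → ℕ)
    (g h : CactusGroup n) (e : ∑ i, j ((π h)⁻¹ i) = ∑ i, j i) :
    Jcast e (cabling (j ∘ ⇑(π h)⁻¹) g) * cabling j h = cabling j (g * h) := by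
  simp only [cabling, map_mul, SemidirectProduct.mul_left, SemidirectProduct.mul_right,
    cableHom_right π hπ]
  rw [Pi.mul_apply]
  congr 1
  · refine (Jcast_cableHom_left e g _ _).trans (congrArg _ (Subtype.ext ?_))
    change (j ∘ ⇑(π h)⁻¹) ∘ ⇑(π g)⁻¹ = j ∘ ⇑(π g * π h)⁻¹
    rw [mul_inv_rev, Perm.coe_mul, Function.comp_assoc]
  · refine congrArg _ (Subtype.ext ?_)
    change j ∘ ⇑(π h)⁻¹ = (j ∘ ⇑(π g * π h)⁻¹) ∘ π g
    rw [Function.comp_assoc, ← Perm.coe_mul, mul_inv_rev, inv_mul_cancel_right]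

end Cabling

theorem cable_eq_sTotal_mul_prod {n N : ℕ} (w : Fin n → ℕ) {p q : ℕ} (hp : 1 ≤ p) (hpq : p ≤ q) :
    (cable w (p - 1) q : CactusGroup N) =
      sTotal (Kfun w (p - 1) + 1) (Kfun w q) *
        ((List.finRange (q - p + 1)).map fun t =>
          sTotal (Kfun w (p + t.1 - 1) + 1) (Kfun w (p + t.1))).prod := by
  rw [cable, blockRev, blockRevs, List.range'_eq_map_range, ← List.map_coe_finRange_eq_range,
    List.map_map, List.map_map, show q - (p - 1) = q - p + 1 by omega]
  congr 3
  funext t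
  simp only [Function.comp_apply, blockRev]
  rw [show p - 1 + t.1 = p + t.1 - 1 by omega, show p + t.1 - 1 + 1 = p + t.1 by omega]

/-- There is a family of functions `δ_{n;k} : J_n → J_{∑k}` (for `n ≥ 1` and `k` with all
`k i ≥ 1`) such that (a) on a generator `s_{p,q}` it is given by
`s_{K_{p-1}+1, K_q} · ∏_{i=p}^{q} s_{K_{i-1}+1, K_i}` and (b) the twisted multiplicativity
`δ_{n;k}(g)·δ_{n;j}(h) = δ_{n;j}(g·h)` holds whenever `k_i = j_{π_n(h)⁻¹(i)}`.
Here `π` is the family of homomorphisms `J_m → Σ_m` determined by `π(s_{p,q}) = ŝ_{p,q}`. -/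
theorem exists_cactus_delta
    (π : ∀ m : ℕ, CactusGroup m →* Equiv.Perm (Fin m))
    (hπ : ∀ (m p q : ℕ) (h : 1 ≤ p ∧ p < q ∧ q ≤ m), π m (s p q h) = sHat m p q) :
    ∃ δ : ∀ (n : ℕ), 1 ≤ n → ∀ (k : Fin n → ℕ), (∀ i, 1 ≤ k i) →
        CactusGroup n → CactusGroup (∑ i, k i),
      (∀ (n : ℕ) (hn : 1 ≤ n) (k : Fin n → ℕ) (hk : ∀ i, 1 ≤ k i)
          (p q : ℕ) (h : 1 ≤ p ∧ p < q ∧ q ≤ n),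
        δ n hn k hk (s p q h) =
          sE (Kfun k (p - 1) + 1) (Kfun k q)
              ⟨by omega, Kfun_lt k hk (by omega) (by omega), Kfun_le_sum k q⟩ *
            ((List.finRange (q - p + 1)).map fun t =>
              sE (Kfun k (p + t.1 - 1) + 1) (Kfun k (p + t.1))
                ⟨by omega, Kfun_lt k hk (by omega) (by have := t.isLt; omega),
                  Kfun_le_sum k _⟩).prod) ∧
      (∀ (n : ℕ) (hn : 1 ≤ n) (kk jj : Fin n → ℕ) (hkk : ∀ i, 1 ≤ kk i)
          (hjj : ∀ i, 1 ≤ jj i) (g h : CactusGroup n)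
          (hmatch : ∀ i, kk i = jj ((π n h)⁻¹ i)),
        Jcast ((Finset.sum_congr rfl fun i _ => hmatch i).trans
            (Equiv.sum_comp (π n h)⁻¹ jj)) (δ n hn kk hkk g) * δ n hn jj hjj h =
          δ n hn jj hjj (g * h)) := by
  refine ⟨fun n _ k _ g => cabling k g, ?_, ?_⟩
  · intro n _ k _ p q h
    simp only [cabling_s, sE_eq_sTotal]
    exact cable_eq_sTotal_mul_prod k h.1 h.2.1.le
  · intro n _ kk jj _ _ g h hmatch
    obtain rfl : kk = jj ∘ ⇑(π n h)⁻¹ := funext hmatch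
    exact cabling_mul (π n) (hπ n) jj g h _
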